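/- arXiv:2602.08664 — 3 statements merged into one kernel-verified Lean document; each statement's English description precedes it below -/
import Mathlib

section
/- On the polynomial semiring 𝕋[x,y] over the tropical semiring, the congruence generated by the single relation x ∼ y does not relate any nonzero element to the additive identity ∞; that is, if f ∼ ∞ under this congruence then f = ∞. Consequently, congruences on 𝕋[x,y] are not determined by their associated ideals. -/
/-!
Evaluation at the point `x = y = 1` (the tropical one, i.e. the real number `0`) is a semiring
homomorphism identifying `x` and `y`, so the congruence generated by `x ∼ y` lies in its kernel.
Tropically, this evaluation is the minimum of the coefficients, which is `∞` only when every
coefficient is `∞`.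
-/

/-- The congruence on `𝕋[x,y]` generated by the single relation `x ∼ y`, where
`𝕋 = (ℝ ∪ {∞}, min, +)` is the tropical semiring and `𝕋[x,y]` is modelled as
`MvPolynomial (Fin 2) (Tropical (WithTop ℝ))`. -/
noncomputable def xySymCon : RingCon (MvPolynomial (Fin 2) (Tropical (WithTop ℝ))) :=
  ringConGen (fun a b => a = MvPolynomial.X 0 ∧ b = MvPolynomial.X 1)

open MvPolynomial

theorem Tropical.sum_eq_zero_iff {R S : Type*} [LinearOrder R] [OrderTop R] {s : Finset S}
    {f : S → Tropical R} : ∑ i ∈ s, f i = 0 ↔ ∀ i ∈ s, f i = 0 := by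
  simp only [← untrop_inj_iff, untrop_zero, Finset.untrop_sum', Finset.inf_eq_top_iff,
    Function.comp_apply]

namespace MvPolynomial

theorem eval_one_eq_sum_coeff {σ R : Type*} [CommSemiring R] (p : MvPolynomial σ R) :
    eval 1 p = ∑ d ∈ p.support, p.coeff d := by
  simp [eval_eq]

theorem tropical_eval_one_eq_zero_iff {σ R : Type*} [LinearOrderedAddCommMonoidWithTop R]
    {p : MvPolynomial σ (Tropical R)} : eval 1 p = 0 ↔ p = 0 := by
  refine ⟨fun h => ?_, fun h => h ▸ map_zero _⟩
  rw [eval_one_eq_sum_coeff, Tropical.sum_eq_zero_iff] at h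
  exact support_eq_empty.mp <| Finset.eq_empty_of_forall_notMem fun d hd =>
    mem_support_iff.mp hd (h d hd)

end MvPolynomial

theorem xySymCon_le_ker_eval_one : xySymCon ≤ RingCon.ker (eval 1) :=
  RingCon.ringConGen_le.mpr <| by rintro _ _ ⟨rfl, rfl⟩; simp

/-- On `𝕋[x,y]`, the congruence generated by `x ∼ y` relates no nonzero element to the
additive identity `∞` (the zero of the polynomial semiring): if `f ∼ ∞` then `f = ∞`.
Moreover the congruence is nontrivial (it relates `x` and `y`, which are distinct), so
congruences on `𝕋[x,y]` are not determined by their associated ideals. -/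
theorem xySymCon_trivial_ideal :
    (∀ f : MvPolynomial (Fin 2) (Tropical (WithTop ℝ)), xySymCon f 0 → f = 0) ∧
    xySymCon (MvPolynomial.X 0) (MvPolynomial.X 1) ∧
    (MvPolynomial.X 0 : MvPolynomial (Fin 2) (Tropical (WithTop ℝ))) ≠ MvPolynomial.X 1 := by
  refine ⟨fun f hf => ?_, RingConGen.Rel.of _ _ ⟨rfl, rfl⟩,
    fun h => absurd (X_injective h) (by decide)⟩
  have hf' : eval 1 f = eval 1 0 := xySymCon_le_ker_eval_one hf
  rwa [map_zero, tropical_eval_one_eq_zero_iff] at hf'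
end

section
/- Let g = X + 1 ∈ K[X] over a trivially valued field K, and let J = ⟨g⟩. Then the tropical polynomial X² ⊕ 0 lies in trop(J) but not in the ideal of 𝕋[X] generated by trop(g) = X ⊕ 0. Hence the tropicalization of an ideal can strictly contain the ideal generated by the tropicalizations of its generators. -/
/-- Tropicalization of a polynomial over a trivially valued field `K`: each nonzero
coefficient is sent to `ν(c) = 0 = 1_𝕋` and each zero coefficient to `∞ = 0_𝕋`, so
`trop(F) = ∑_{n ∈ supp F} 1_𝕋 · Xⁿ` in `𝕋[X] = Polynomial (Tropical (WithTop ℝ))`. -/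
noncomputable def tropPoly {K : Type*} [Field K] (F : Polynomial K) :
    Polynomial (Tropical (WithTop ℝ)) :=
  ∑ n ∈ F.support, Polynomial.monomial n 1

lemma support_X_sq_sub_one (K : Type*) [Field K] :
    ((Polynomial.X : Polynomial K) ^ 2 - 1).support = {2, 0} := by
  ext n
  simp only [Polynomial.mem_support_iff, Polynomial.coeff_sub, Polynomial.coeff_X_pow,
    Polynomial.coeff_one, Finset.mem_insert, Finset.mem_singleton]
  rcases eq_or_ne n 2 with h2 | h2 <;> rcases eq_or_ne n 0 with h0 | h0 <;>
    simp [h2, h0]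

lemma tropPoly_X_sq_sub_one (K : Type*) [Field K] :
    tropPoly ((Polynomial.X : Polynomial K) ^ 2 - 1)
      = Polynomial.X ^ 2 + 1 := by
  rw [tropPoly, support_X_sq_sub_one,
    show ({2, 0} : Finset ℕ) = insert 2 {0} from rfl, Finset.sum_insert (by decide),
    Finset.sum_singleton, ← Polynomial.X_pow_eq_monomial, Polynomial.monomial_zero_one]

/-- For `g = X + 1 ∈ K[X]` over a trivially valued field `K` and `J = ⟨g⟩`, the tropical
polynomial `X² ⊕ 0` (i.e. `X² + 1` in `𝕋[X]`) lies in `trop(J)` — the ideal generated by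
the tropicalizations of all elements of `J` — but not in the ideal generated by
`trop(g) = X ⊕ 0`. -/
theorem trop_ideal_strictly_larger (K : Type*) [Field K] :
    ((Polynomial.X) ^ 2 + 1 : Polynomial (Tropical (WithTop ℝ))) ∈
      Ideal.span (tropPoly ''
        ((Ideal.span {(Polynomial.X + 1 : Polynomial K)} : Ideal (Polynomial K)) :
          Set (Polynomial K))) ∧
    ((Polynomial.X) ^ 2 + 1 : Polynomial (Tropical (WithTop ℝ))) ∉
      Ideal.span {(Polynomial.X + 1 : Polynomial (Tropical (WithTop ℝ)))} := by
  constructor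
  · -- `X² - 1 = (X+1)(X-1) ∈ J`, and its tropicalization is `X² + 1`.
    apply Ideal.subset_span
    refine ⟨(Polynomial.X : Polynomial K) ^ 2 - 1, ?_, tropPoly_X_sq_sub_one K⟩
    exact Ideal.mem_span_singleton.mpr ⟨Polynomial.X - 1, by ring⟩
  · intro hmem
    rw [Ideal.mem_span_singleton] at hmem
    obtain ⟨q, hq⟩ := hmem
    rw [add_mul, one_mul] at hq
    have h0 : (1 : Tropical (WithTop ℝ)) = q.coeff 0 := by
      have := congrArg (fun p => Polynomial.coeff p 0) hq
      simpa using this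
    have h1 : (0 : Tropical (WithTop ℝ)) = q.coeff 0 + q.coeff 1 := by
      have := congrArg (fun p => Polynomial.coeff p 1) hq
      simpa [Polynomial.coeff_X_mul, Polynomial.coeff_one] using this
    have hz : q.coeff 0 = 0 := (Tropical.add_eq_zero_iff.mp h1.symm).1
    rw [← h0] at hz
    exact one_ne_zero hz
end

section
/- Let V be a K-vector space, let V̂ = ⊕_{a ∈ V} K be the vector space with basis {x_a : a ∈ V} indexed by the elements of V, and let π : V̂ → V be the linear map sending x_a to a. Then the kernel of π is spanned by the elements x_a + x_b + x_c for all a, b, c ∈ V with a + b + c = 0, together with x_{λa} − λ·x_a for all λ ∈ K and a ∈ V. -/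
/-- Let `V̂ = ⊕_{a ∈ V} K` be the free `K`-vector space on the underlying set of `V`
(modelled as `V →₀ K`, with basis vectors `x_a = single a 1`), and let `π : V̂ → V` be
the linear map sending `x_a ↦ a`. Then `ker π` is spanned by the elements
`x_a + x_b + x_c` for `a + b + c = 0` together with `x_{λ·a} - λ·x_a` for `λ ∈ K`,
`a ∈ V`. -/
theorem ker_pi_spanned_by_bend_generators {K V : Type*} [Field K] [AddCommGroup V]
    [Module K V] :
    Submodule.span K
      {x : V →₀ K |
        (∃ a b c : V, a + b + c = 0 ∧
          x = Finsupp.single a 1 + Finsupp.single b 1 + Finsupp.single c 1) ∨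
        (∃ (l : K) (a : V), x = Finsupp.single (l • a) 1 - l • Finsupp.single a 1)} =
    LinearMap.ker (Finsupp.linearCombination K (id : V → V)) := by
  set S : Submodule K (V →₀ K) := Submodule.span K
      {x : V →₀ K |
        (∃ a b c : V, a + b + c = 0 ∧
          x = Finsupp.single a 1 + Finsupp.single b 1 + Finsupp.single c 1) ∨
        (∃ (l : K) (a : V), x = Finsupp.single (l • a) 1 - l • Finsupp.single a 1)} with hS
  have hsmul : ∀ (l : K) (a : V),
      Finsupp.single (l • a) 1 - l • Finsupp.single a 1 ∈ S :=
    fun l a => Submodule.subset_span (Or.inr ⟨l, a, rfl⟩)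
  have hadd : ∀ a b : V,
      Finsupp.single (a + b) 1 - (Finsupp.single a 1 + Finsupp.single b 1) ∈ S := by
    intro a b
    have h1 : Finsupp.single a 1 + Finsupp.single b 1 + Finsupp.single (-(a+b)) 1 ∈ S :=
      Submodule.subset_span (Or.inl ⟨a, b, -(a+b), add_neg_cancel (a + b), rfl⟩)
    have h2 := hsmul (-1) (a + b)
    rw [neg_one_smul, neg_one_smul] at h2
    generalize hp : (Finsupp.single (a + b) 1 : V →₀ K) = p at h2 ⊢
    generalize hq : (Finsupp.single a 1 : V →₀ K) = q at h1 ⊢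
    generalize hr : (Finsupp.single b 1 : V →₀ K) = r at h1 ⊢
    generalize hs : (Finsupp.single (-(a+b)) 1 : V →₀ K) = s at h1 h2 ⊢
    have heq : p - (q + r) = (s - -p) - (q + r + s) := by abel
    rw [heq]
    exact sub_mem h2 h1
  apply le_antisymm
  · rw [Submodule.span_le]
    rintro x (⟨a, b, c, habc, rfl⟩ | ⟨l, a, rfl⟩)
    · simp [LinearMap.mem_ker, habc]
    · simp [LinearMap.mem_ker]
  · intro x hx
    rw [LinearMap.mem_ker] at hx
    let g : V →ₗ[K] ((V →₀ K) ⧸ S) :=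
      { toFun := fun a => S.mkQ (Finsupp.single a 1)
        map_add' := fun a b => by
          rw [← sub_eq_zero, ← map_add, ← map_sub, Submodule.mkQ_apply,
            Submodule.Quotient.mk_eq_zero]
          exact hadd a b
        map_smul' := fun l a => by
          simp only [RingHom.id_apply]
          rw [← sub_eq_zero, ← map_smul, ← map_sub, Submodule.mkQ_apply,
            Submodule.Quotient.mk_eq_zero]
          exact hsmul l a }
    have key : S.mkQ = g.comp (Finsupp.linearCombination K (id : V → V)) := by
      apply Finsupp.lhom_ext
      intro a b
      simp only [LinearMap.comp_apply, Finsupp.linearCombination_single, id_eq, map_smul]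
      show S.mkQ (Finsupp.single a b) = b • S.mkQ (Finsupp.single a 1)
      rw [← map_smul, Finsupp.smul_single, smul_eq_mul, mul_one]
    have : S.mkQ x = 0 := by rw [key]; simp [hx]
    rwa [Submodule.mkQ_apply, Submodule.Quotient.mk_eq_zero] at this
end
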